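/- Let K be a totally real number field and Q(x,y) = αx² + βxy + ηy² a totally positive definite binary quadratic form over O_K. If both α and η are indecomposable totally positive integers of O_K and β ≠ 0, then Q is additively indecomposable. -/

import Mathlib

/-!
Write `Q = Q₁ + Q₂`. The coefficients `α = a₁ + a₂` and `η = c₁ + c₂` split into totally
nonnegative integers, so by indecomposability one summand of each vanishes. A semi-definite form
with a vanishing square coefficient has vanishing middle coefficient. Hence either some `Qᵢ` has
both square coefficients zero, and then is zero, or `b₁ = b₂ = 0`, contradicting `β ≠ 0`.
-/

open NumberField

/-- `a x² + b xy + c y²` over `K` is totally positive semi-definite. -/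
def TPSDK (K : Type*) [Field K] (a b c : K) : Prop :=
  ∀ σ : K →+* ℝ, ∀ u v : ℝ, 0 ≤ σ a * u ^ 2 + σ b * (u * v) + σ c * v ^ 2

/-- `a x² + b xy + c y²` over `K` is totally positive definite. -/
def TPDK (K : Type*) [Field K] (a b c : K) : Prop :=
  ∀ σ : K →+* ℝ, ∀ u v : ℝ, (u ≠ 0 ∨ v ≠ 0) →
    0 < σ a * u ^ 2 + σ b * (u * v) + σ c * v ^ 2

/-- `x ∈ 𝓞 K` is totally positive. -/
def TotPosI (K : Type*) [Field K] [NumberField K] (x : 𝓞 K) : Prop :=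
  ∀ σ : K →+* ℝ, 0 < σ (x : K)

lemma eq_zero_of_forall_nonneg_mul_add {A B : ℝ} (h : ∀ u : ℝ, 0 ≤ B * u + A) : B = 0 := by
  by_contra hB
  have := h (-(A + 1) / B)
  rw [mul_div_cancel₀ _ hB] at this
  linarith

namespace TPSDK

section

variable {K : Type*} [Field K] {a b c : K}

lemma symm (h : TPSDK K a b c) : TPSDK K c b a := fun σ u v => by
  have := h σ v u
  rw [mul_comm v u] at this
  linarith

lemma left_nonneg (h : TPSDK K a b c) (σ : K →+* ℝ) : 0 ≤ σ a := by
  simpa using h σ 1 0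

lemma right_nonneg (h : TPSDK K a b c) (σ : K →+* ℝ) : 0 ≤ σ c :=
  h.symm.left_nonneg σ

/-- Along `y = 1` the form is affine in `x`, so its slope vanishes. -/
lemma middle_eq_zero_of_left_eq_zero (σ : K →+* ℝ) (h : TPSDK K a b c) (ha : a = 0) :
    b = 0 := by
  refine (map_eq_zero_iff σ σ.injective).mp
    (eq_zero_of_forall_nonneg_mul_add (A := σ c) fun u => ?_)
  simpa [ha] using h σ u 1

lemma middle_eq_zero (σ : K →+* ℝ) (h : TPSDK K a b c) (hac : a = 0 ∨ c = 0) : b = 0 :=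
  hac.elim (h.middle_eq_zero_of_left_eq_zero σ) (h.symm.middle_eq_zero_of_left_eq_zero σ)

end

lemma middle_eq_zero_of_coe {K : Type*} [Field K] [NumberField K] (σ : K →+* ℝ)
    {a b c : 𝓞 K} (h : TPSDK K a b c) (hac : a = 0 ∨ c = 0) : b = 0 := by
  refine RingOfIntegers.coe_eq_zero_iff.mp (h.middle_eq_zero σ ?_)
  simpa only [RingOfIntegers.coe_eq_zero_iff] using hac

end TPSDK

lemma totPosI_or_eq_zero {K : Type*} [Field K] [NumberField K] {x : 𝓞 K}
    (hx : ∀ σ : K →+* ℝ, 0 ≤ σ (x : K)) : TotPosI K x ∨ x = 0 := by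
  refine or_iff_not_imp_right.mpr fun hx₀ σ => (hx σ).lt_of_ne' ?_
  rwa [map_ne_zero_iff σ σ.injective, ne_eq, RingOfIntegers.coe_eq_zero_iff]

lemma eq_zero_or_eq_zero_of_indecomposable {K : Type*} [Field K] [NumberField K] {x y z : 𝓞 K}
    (hz : ¬ ∃ x y : 𝓞 K, TotPosI K x ∧ TotPosI K y ∧ x + y = z)
    (hx : ∀ σ : K →+* ℝ, 0 ≤ σ (x : K)) (hy : ∀ σ : K →+* ℝ, 0 ≤ σ (y : K)) (hxy : x + y = z) :
    x = 0 ∨ y = 0 := by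
  rcases totPosI_or_eq_zero hx with hx | hx
  · rcases totPosI_or_eq_zero hy with hy | hy
    · exact (hz ⟨x, y, hx, hy, hxy⟩).elim
    · exact .inr hy
  · exact .inl hx

theorem stmt7_general (K : Type*) [Field K] [NumberField K]
    (htr : ∀ σ : K →+* ℂ, ComplexEmbedding.IsReal σ)
    (α β η : 𝓞 K)
    (hαind : ¬ ∃ x y : 𝓞 K, TotPosI K x ∧ TotPosI K y ∧ x + y = α)
    (hηind : ¬ ∃ x y : 𝓞 K, TotPosI K x ∧ TotPosI K y ∧ x + y = η)
    (hβ : β ≠ 0) :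
    ¬ ∃ a₁ b₁ c₁ a₂ b₂ c₂ : 𝓞 K,
      TPSDK K a₁ b₁ c₁ ∧ TPSDK K a₂ b₂ c₂ ∧
      ¬(a₁ = 0 ∧ b₁ = 0 ∧ c₁ = 0) ∧ ¬(a₂ = 0 ∧ b₂ = 0 ∧ c₂ = 0) ∧
      a₁ + a₂ = α ∧ b₁ + b₂ = β ∧ c₁ + c₂ = η := by
  rintro ⟨a₁, b₁, c₁, a₂, b₂, c₂, h₁, h₂, hne₁, hne₂, rfl, rfl, rfl⟩
  obtain ⟨φ⟩ : Nonempty (K →+* ℂ) := inferInstance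
  have hb₁ := h₁.middle_eq_zero_of_coe (htr φ).embedding
  have hb₂ := h₂.middle_eq_zero_of_coe (htr φ).embedding
  rcases eq_zero_or_eq_zero_of_indecomposable hαind h₁.left_nonneg h₂.left_nonneg rfl
    with ha | ha <;>
  rcases eq_zero_or_eq_zero_of_indecomposable hηind h₁.right_nonneg h₂.right_nonneg rfl
    with hc | hc
  · exact hne₁ ⟨ha, hb₁ (.inl ha), hc⟩
  · exact hβ (by rw [hb₁ (.inl ha), hb₂ (.inr hc), add_zero])
  · exact hβ (by rw [hb₁ (.inr hc), hb₂ (.inl ha), add_zero])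
  · exact hne₂ ⟨ha, hb₂ (.inr hc), hc⟩

/-- Let `K` be totally real and `Q(x,y) = αx² + βxy + ηy²` totally positive
definite over `𝓞 K`. If `α` and `η` are indecomposable totally positive integers
and `β ≠ 0`, then `Q` is additively indecomposable. -/
theorem stmt7 (K : Type*) [Field K] [NumberField K]
    (htr : ∀ σ : K →+* ℂ, ComplexEmbedding.IsReal σ)
    (α β η : 𝓞 K)
    (hQ : TPDK K (α : K) (β : K) (η : K))
    (hαpos : TotPosI K α) (hηpos : TotPosI K η)
    (hαind : ¬ ∃ x y : 𝓞 K, TotPosI K x ∧ TotPosI K y ∧ x + y = α)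
    (hηind : ¬ ∃ x y : 𝓞 K, TotPosI K x ∧ TotPosI K y ∧ x + y = η)
    (hβ : β ≠ 0) :
    ¬ ∃ a₁ b₁ c₁ a₂ b₂ c₂ : 𝓞 K,
      TPSDK K a₁ b₁ c₁ ∧ TPSDK K a₂ b₂ c₂ ∧
      ¬(a₁ = 0 ∧ b₁ = 0 ∧ c₁ = 0) ∧ ¬(a₂ = 0 ∧ b₂ = 0 ∧ c₂ = 0) ∧
      a₁ + a₂ = α ∧ b₁ + b₂ = β ∧ c₁ + c₂ = η :=
  stmt7_general K htr α β η hαind hηind hβ
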